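/- For all Boolean functions f on n bits, g on m bits, and p ∈ [0,1], with g(p) = P_{x∼π_p}[g(x)=1], the distributional subcube partition complexity is submultiplicative under composition: sc(f∘g, π_p) ≤ sc(f, π_{g(p)}) · sc(g, π_p). -/

import Mathlib

open Classical

noncomputable section

/-- Flip the bits of `x` in the set `B`. -/
def flipOn {ι : Type*} [DecidableEq ι] (x : ι → Bool) (B : Finset ι) : ι → Bool :=
  fun i => if i ∈ B then !(x i) else x i

/-- Pointwise sensitivity of `f` at `x`. -/
def sensAt {ι : Type*} [Fintype ι] [DecidableEq ι] (f : (ι → Bool) → Bool)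
    (x : ι → Bool) : ℕ :=
  (Finset.univ.filter fun i => f (flipOn x {i}) ≠ f x).card

/-- Pointwise block sensitivity of `f` at `x`. -/
def bsAt {ι : Type*} [DecidableEq ι] (f : (ι → Bool) → Bool) (x : ι → Bool) : ℕ :=
  sSup {m | ∃ B : Fin m → Finset ι,
    (∀ j, f (flipOn x (B j)) ≠ f x) ∧ ∀ j k, j ≠ k → Disjoint (B j) (B k)}

/-- `W` is a witness set for `f` at `x`. -/
def IsWitness {ι : Type*} (f : (ι → Bool) → Bool) (x : ι → Bool) (W : Finset ι) : Prop :=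
  ∀ y, (∀ i ∈ W, y i = x i) → f y = f x

/-- Pointwise minimum witness size of `f` at `x`. -/
def witAt {ι : Type*} (f : (ι → Bool) → Bool) (x : ι → Bool) : ℕ :=
  sInf {k | ∃ W : Finset ι, W.card = k ∧ IsWitness f x W}

/-- Decision trees querying coordinates in `ι`. -/
inductive DTree (ι : Type*) where
  | leaf : DTree ι
  | node : ι → DTree ι → DTree ι → DTree ι

/-- The set of coordinates queried by the tree `T` on input `x`. -/
def DTree.path {ι : Type*} [DecidableEq ι] : DTree ι → (ι → Bool) → Finset ι
  | .leaf, _ => ∅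
  | .node i t0 t1, x => insert i (if x i then t1.path x else t0.path x)

/-- The tree `T` determines `f`: at each leaf the queried bits witness the value of `f`. -/
def DTree.Determines {ι : Type*} [DecidableEq ι] (T : DTree ι)
    (f : (ι → Bool) → Bool) : Prop :=
  ∀ x, IsWitness f x (T.path x)

/-- A partition of the hypercube into subcubes, encoded by the map sending each point to
the code (fixed coordinates) of its part. -/
structure SubcubePartition (ι : Type*) where
  code : (ι → Bool) → (ι → Option Bool)
  self_mem : ∀ x i b, code x i = some b → x i = b
  compat : ∀ x y, (∀ i b, code x i = some b → y i = b) → code y = code x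

/-- Number of coordinates fixed by the subcube containing `x`. -/
def SubcubePartition.codim {ι : Type*} [Fintype ι] (P : SubcubePartition ι)
    (x : ι → Bool) : ℕ :=
  (Finset.univ.filter fun i => (P.code x i).isSome).card

/-- The partition determines `f`, i.e. `f` is constant on each part. -/
def SubcubePartition.Determines {ι : Type*} (P : SubcubePartition ι)
    (f : (ι → Bool) → Bool) : Prop :=
  ∀ x y, (∀ i b, P.code x i = some b → y i = b) → f y = f x

/-- Deterministic sensitivity. -/
def detSens {ι : Type*} [Fintype ι] [DecidableEq ι] (f : (ι → Bool) → Bool) : ℕ :=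
  Finset.univ.sup fun x => sensAt f x

/-- Deterministic block sensitivity. -/
def detBS {ι : Type*} [Fintype ι] [DecidableEq ι] (f : (ι → Bool) → Bool) : ℕ :=
  Finset.univ.sup fun x => bsAt f x

/-- Deterministic witness complexity. -/
def detWit {ι : Type*} [Fintype ι] [DecidableEq ι] (f : (ι → Bool) → Bool) : ℕ :=
  Finset.univ.sup fun x => witAt f x

/-- Deterministic subcube partition complexity. -/
def detSC {ι : Type*} [Fintype ι] (f : (ι → Bool) → Bool) : ℕ :=
  sInf {k | ∃ P : SubcubePartition ι, P.Determines f ∧ ∀ x, P.codim x ≤ k}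

/-- Deterministic algorithmic (decision tree) complexity. -/
def detAlg {ι : Type*} [Fintype ι] [DecidableEq ι] (f : (ι → Bool) → Bool) : ℕ :=
  sInf {k | ∃ T : DTree ι, T.Determines f ∧ ∀ x, (T.path x).card ≤ k}

/-- Weight of the configuration `x` under the product Bernoulli(p) measure `π_p`. -/
def wt {ι : Type*} [Fintype ι] (p : ℝ) (x : ι → Bool) : ℝ :=
  ∏ i, (if x i then p else 1 - p)

/-- Expectation under `π_p`. -/
def expec {ι : Type*} [Fintype ι] [DecidableEq ι] (p : ℝ) (g : (ι → Bool) → ℝ) : ℝ :=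
  ∑ x, wt p x * g x

/-- Distributional sensitivity. -/
def distSens {ι : Type*} [Fintype ι] [DecidableEq ι] (f : (ι → Bool) → Bool) (p : ℝ) : ℝ :=
  expec p fun x => (sensAt f x : ℝ)

/-- Distributional block sensitivity. -/
def distBS {ι : Type*} [Fintype ι] [DecidableEq ι] (f : (ι → Bool) → Bool) (p : ℝ) : ℝ :=
  expec p fun x => (bsAt f x : ℝ)

/-- Distributional witness complexity. -/
def distWit {ι : Type*} [Fintype ι] [DecidableEq ι] (f : (ι → Bool) → Bool) (p : ℝ) : ℝ :=
  expec p fun x => (witAt f x : ℝ)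

/-- Distributional subcube partition complexity. -/
def distSC {ι : Type*} [Fintype ι] [DecidableEq ι] (f : (ι → Bool) → Bool) (p : ℝ) : ℝ :=
  sInf {c | ∃ P : SubcubePartition ι, P.Determines f ∧
    c = expec p fun x => (P.codim x : ℝ)}

/-- Distributional algorithmic complexity. -/
def distAlg {ι : Type*} [Fintype ι] [DecidableEq ι] (f : (ι → Bool) → Bool) (p : ℝ) : ℝ :=
  sInf {c | ∃ T : DTree ι, T.Determines f ∧
    c = expec p fun x => ((T.path x).card : ℝ)}

/-- `μ x J` is the joint probability that the bits equal `x` and the random set equals `J`;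
the conditions say: the marginal of the bits is `π_p`, the random set is a.s. a witness set
for `f`, and the random set is local (conditionally on `{I = J}` and the bits on `J`, the
bits outside `J` are still i.i.d. Bernoulli(p)). -/
def IsLocalWitnessSystem {ι : Type*} [Fintype ι] [DecidableEq ι]
    (f : (ι → Bool) → Bool) (p : ℝ) (μ : (ι → Bool) → Finset ι → ℝ) : Prop :=
  (∀ x J, 0 ≤ μ x J) ∧
  (∀ x, ∑ J, μ x J = wt p x) ∧
  (∀ x J, μ x J ≠ 0 → IsWitness f x J) ∧
  (∀ (J : Finset ι) x y, (∀ i ∈ J, x i = y i) → μ x J * wt p y = μ y J * wt p x)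

/-- Distributional local witness complexity. -/
def distLocal {ι : Type*} [Fintype ι] [DecidableEq ι]
    (f : (ι → Bool) → Bool) (p : ℝ) : ℝ :=
  sInf {c | ∃ μ : (ι → Bool) → Finset ι → ℝ, IsLocalWitnessSystem f p μ ∧
    c = ∑ x, ∑ J, μ x J * (J.card : ℝ)}

/-- The composition `f ∘ g` of Boolean functions, on `n · m` bits. -/
def bcomp {n m : ℕ} (f : (Fin n → Bool) → Bool) (g : (Fin m → Bool) → Bool) :
    (Fin n × Fin m → Bool) → Bool :=
  fun x => f fun i => g fun j => x (i, j)

/-- `P_{x ∼ π_p}[g(x) = 1]`. -/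
def probOne {ι : Type*} [Fintype ι] [DecidableEq ι] (g : (ι → Bool) → Bool) (p : ℝ) : ℝ :=
  ∑ x, wt p x * (if g x then 1 else 0)

/-!
Compose optimal partitions `P` for `f` and `Q` for `g`: the part of `x` fixes, for every block `i`
that `P` fixes at `u = (g(xⁱ))ᵢ`, the `Q`-subcube of `xⁱ`. This partition determines `f ∘ g`, and
its expected codimension is `∑ᵢ E[1{P fixes i at u} · codim_Q(xⁱ)]`. Whether a subcube partition
fixes coordinate `i` does not depend on the bit `uᵢ`, so the indicator is a function of the other
blocks and is independent of `xⁱ`. Hence each term factors as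
`Pr_{π_{g(p)}}[P fixes i] · E_{π_p}[codim_Q]`, and summing over `i` gives
`sc(f, π_{g(p)}) · sc(g, π_p)`; the infima are attained since there are finitely many partitions.
-/

open Finset Function

section WeightedSums

variable {κ V : Type*} [Fintype κ] [DecidableEq κ] (w : V → ℝ)

lemma prod_apply_update_mul (z : κ → V) (i : κ) (v : V) :
    (∏ j, w (update z i v j)) * w (z i) = (∏ j, w (z j)) * w v := by
  rw [← mul_prod_erase univ _ (mem_univ i), ← mul_prod_erase univ (fun j => w (z j)) (mem_univ i),
    update_self, prod_congr rfl fun j hj => by rw [update_of_ne (ne_of_mem_erase hj)]]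
  ring

variable [Fintype V]

/-- Swap `z i` with an independent copy `v`: `(z, v) ↦ (update z i v, z i)` is an involution
preserving the weight and `A`. -/
lemma sum_prod_mul_indep (hw : ∑ v, w v = 1) (i : κ) (A : (κ → V) → ℝ)
    (hA : ∀ z v, A (update z i v) = A z) (B : V → ℝ) :
    ∑ z : κ → V, (∏ j, w (z j)) * (A z * B (z i))
      = (∑ z : κ → V, (∏ j, w (z j)) * A z) * ∑ v, w v * B v := by
  let σ : (κ → V) × V → (κ → V) × V := fun zv => (update zv.1 i zv.2, zv.1 i)
  have hσ : Involutive σ := fun ⟨z, v⟩ => by simp [σ]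
  let F : (κ → V) × V → ℝ := fun zv => (∏ j, w (zv.1 j)) * A zv.1 * (w zv.2 * B zv.2)
  calc ∑ z : κ → V, (∏ j, w (z j)) * (A z * B (z i))
      = ∑ zv : (κ → V) × V, F (σ zv) := by
        rw [Fintype.sum_prod_type]
        refine sum_congr rfl fun z _ => ?_
        simp only [F, σ, hA]
        rw [← mul_one (_ * _), ← hw, mul_sum]
        refine sum_congr rfl fun v _ => ?_
        linear_combination -(A z * B (z i)) * prod_apply_update_mul w z i v
    _ = ∑ zv, F zv := Equiv.sum_comp hσ.toPerm F
    _ = _ := by rw [Fintype.sum_prod_type, sum_mul_sum]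

lemma sum_weight_eq_ite (hw : ∑ v, w v = 1) (g : V → Bool) (b : Bool) :
    ∑ v, w v * (if g v = b then 1 else 0)
      = if b then ∑ v, w v * (if g v then 1 else 0) else 1 - ∑ v, w v * (if g v then 1 else 0) := by
  cases b
  · rw [if_neg Bool.false_ne_true, eq_sub_iff_add_eq, ← sum_add_distrib]
    exact .trans (sum_congr rfl fun v _ => by cases g v <;> simp) hw
  · simp

lemma sum_prod_mul_comp_eq_expec (hw : ∑ v, w v = 1) (g : V → Bool) (h : (κ → Bool) → ℝ) :
    ∑ z : κ → V, (∏ j, w (z j)) * h (fun j => g (z j))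
      = expec (∑ v, w v * if g v then 1 else 0) h := by
  unfold expec wt
  simp_rw [← sum_weight_eq_ite w hw, Fintype.prod_sum, sum_mul]
  rw [sum_comm]
  refine sum_congr rfl fun z _ => ?_
  simp only [prod_mul_distrib, prod_boole]
  simp only [mem_univ, forall_const, ← funext_iff, mul_ite, mul_one, mul_zero, ite_mul, zero_mul,
    sum_ite_eq, if_true]

end WeightedSums

namespace SubcubePartition

variable {ι κ : Type*}

/-- If `update x i b` did not fix `i`, then `x` would lie in its subcube, so the codes would agree. -/
lemma isSome_code_update [DecidableEq ι] (P : SubcubePartition ι) (x : ι → Bool) (i : ι)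
    (b : Bool) : (P.code (update x i b) i).isSome = (P.code x i).isSome := by
  suffices h : ∀ x b, (P.code x i).isSome → (P.code (update x i b) i).isSome by
    refine Bool.eq_iff_iff.mpr ⟨fun hx => ?_, h x b⟩
    simpa using h (update x i b) (x i) hx
  intro x b hx
  by_contra hn
  have hcode : P.code x = P.code (update x i b) := P.compat _ _ fun j c hj => by
    have hji : j ≠ i := by rintro rfl; simp [hj] at hn
    simpa [update_of_ne hji] using P.self_mem _ j c hj
  exact hn (hcode ▸ hx)

lemma code_injective : Injective (code : SubcubePartition ι → _) :=
  fun ⟨_, _, _⟩ ⟨_, _, _⟩ h => by congr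

instance [Finite ι] : Finite (SubcubePartition ι) :=
  .of_injective _ code_injective

lemma codim_eq_sum [Fintype ι] (P : SubcubePartition ι) (x : ι → Bool) :
    P.codim x = ∑ i, if (P.code x i).isSome then 1 else 0 :=
  card_filter _ _

def singletons (ι : Type*) : SubcubePartition ι where
  code x i := some (x i)
  self_mem _ _ _ := Option.some_inj.mp
  compat x y h := by rw [funext fun i => h i (x i) rfl]

lemma determines_singletons (f : (ι → Bool) → Bool) : (singletons ι).Determines f :=
  fun x y h => by rw [funext fun i => h i (x i) rfl]

variable (P : SubcubePartition ι) (g : (κ → Bool) → Bool) (Q : SubcubePartition κ)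

def compCode (x : ι × κ → Bool) (ij : ι × κ) : Option Bool :=
  if (P.code (fun i => g (curry x i)) ij.1).isSome then Q.code (curry x ij.1) ij.2 else none

variable {P g Q} {x y : ι × κ → Bool}

lemma agree_row_of_agree_compCode (hxy : ∀ ij b, compCode P g Q x ij = some b → y ij = b)
    {i : ι} (hi : (P.code (fun i => g (curry x i)) i).isSome) :
    ∀ j b, Q.code (curry x i) j = some b → curry y i j = b :=
  fun j b hj => hxy (i, j) b (by simpa [compCode, hi] using hj)

lemma agree_outer_of_agree_compCode (hQ : Q.Determines g)
    (hxy : ∀ ij b, compCode P g Q x ij = some b → y ij = b) :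
    ∀ i b, P.code (fun i => g (curry x i)) i = some b → g (curry y i) = b := fun i b hb => by
  rw [hQ _ _ (agree_row_of_agree_compCode hxy (by simp [hb]))]
  exact P.self_mem _ i b hb

variable (P g Q)

def comp (hQ : Q.Determines g) : SubcubePartition (ι × κ) where
  code := compCode P g Q
  self_mem x ij b h := by
    unfold compCode at h
    split_ifs at h
    exact Q.self_mem _ ij.2 b h
  compat x y hxy := by
    have hP := P.compat _ _ (agree_outer_of_agree_compCode hQ hxy)
    funext ij
    unfold compCode
    rw [hP]
    split_ifs with hi
    · rw [Q.compat _ _ (agree_row_of_agree_compCode hxy hi)]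
    · rfl

variable {P g Q}

lemma determines_comp {f : (ι → Bool) → Bool} (hP : P.Determines f) (hQ : Q.Determines g) :
    (P.comp g Q hQ).Determines fun x => f fun i => g (curry x i) :=
  fun _ _ hxy => hP _ _ (agree_outer_of_agree_compCode hQ hxy)

lemma codim_comp [Fintype ι] [Fintype κ] (hQ : Q.Determines g) (x : ι × κ → Bool) :
    (P.comp g Q hQ).codim x
      = ∑ i, if (P.code (fun i => g (curry x i)) i).isSome then Q.codim (curry x i) else 0 := by
  rw [codim_eq_sum, Fintype.sum_prod_type]
  refine sum_congr rfl fun i _ => ?_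
  split_ifs with hi
  · simp [comp, compCode, hi, codim_eq_sum]
  · simp [comp, compCode, hi]

end SubcubePartition

section Expectation

variable {ι κ : Type*} [Fintype ι] [DecidableEq ι] [Fintype κ] [DecidableEq κ]

lemma sum_wt (p : ℝ) : ∑ x : ι → Bool, wt p x = 1 := by
  simp only [wt]
  rw [← Fintype.prod_sum fun _ (b : Bool) => if b then p else 1 - p]
  simp

lemma expec_eq_sum_curry (p : ℝ) (h : (ι × κ → Bool) → ℝ) :
    expec p h = ∑ z : ι → κ → Bool, (∏ i, wt p (z i)) * h (uncurry z) := by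
  rw [expec, ← (Equiv.curry ι κ Bool).symm.sum_comp]
  simp only [wt, Fintype.prod_prod_type]
  rfl

lemma expec_codim_comp (p : ℝ) (P : SubcubePartition ι) (g : (κ → Bool) → Bool)
    (Q : SubcubePartition κ) (hQ : Q.Determines g) :
    expec p (fun x => ((P.comp g Q hQ).codim x : ℝ))
      = expec (probOne g p) (fun u => (P.codim u : ℝ)) * expec p (fun v => (Q.codim v : ℝ)) := by
  let fixed (i : ι) (u : ι → Bool) : ℝ := if (P.code u i).isSome then 1 else 0
  calc expec p (fun x => ((P.comp g Q hQ).codim x : ℝ))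
      = ∑ i, ∑ z : ι → κ → Bool, (∏ i, wt p (z i)) *
          (fixed i (fun k => g (z k)) * (Q.codim (z i) : ℝ)) := by
        simp only [expec_eq_sum_curry, SubcubePartition.codim_comp, Nat.cast_sum, Nat.cast_ite,
          Nat.cast_zero, fixed, ite_mul, one_mul, zero_mul, mul_sum]
        exact sum_comm
    _ = ∑ i, (∑ z : ι → κ → Bool, (∏ i, wt p (z i)) * fixed i (fun k => g (z k))) *
          expec p (fun v => (Q.codim v : ℝ)) := by
        refine sum_congr rfl fun i _ => sum_prod_mul_indep _ (sum_wt p) i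
          (fun z => fixed i fun k => g (z k)) (fun z v => ?_) (fun v => (Q.codim v : ℝ))
        simp only [fixed, apply_update (fun _ => g), SubcubePartition.isSome_code_update]
    _ = ∑ i, expec (probOne g p) (fixed i) * expec p (fun v => (Q.codim v : ℝ)) := by
        simp only [sum_prod_mul_comp_eq_expec _ (sum_wt p)]
        rfl
    _ = _ := by
        rw [← sum_mul]
        congr 1
        simp only [expec, SubcubePartition.codim_eq_sum, fixed, Nat.cast_sum, Nat.cast_ite,
          Nat.cast_one, Nat.cast_zero, mul_sum]
        exact sum_comm

end Expectation

section DistSC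

variable {ι : Type*} [Fintype ι] [DecidableEq ι]

lemma finite_expec_codim (f : (ι → Bool) → Bool) (p : ℝ) :
    {c | ∃ P : SubcubePartition ι, P.Determines f ∧ c = expec p fun x => (P.codim x : ℝ)}.Finite :=
  (Set.finite_range fun P : SubcubePartition ι => expec p fun x => (P.codim x : ℝ)).subset
    fun _ ⟨P, _, hc⟩ => ⟨P, hc.symm⟩

lemma distSC_le_expec_codim {f : (ι → Bool) → Bool} {P : SubcubePartition ι}
    (hP : P.Determines f) (p : ℝ) : distSC f p ≤ expec p fun x => (P.codim x : ℝ) :=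
  csInf_le (finite_expec_codim f p).bddBelow ⟨P, hP, rfl⟩

lemma exists_determines_expec_codim_eq_distSC (f : (ι → Bool) → Bool) (p : ℝ) :
    ∃ P : SubcubePartition ι, P.Determines f ∧ (expec p fun x => (P.codim x : ℝ)) = distSC f p :=
  have hne : {c | ∃ P : SubcubePartition ι, P.Determines f ∧
      c = expec p fun x => (P.codim x : ℝ)}.Nonempty :=
    ⟨_, .singletons ι, SubcubePartition.determines_singletons f, rfl⟩
  let ⟨P, hP, hc⟩ := hne.csInf_mem (finite_expec_codim f p)
  ⟨P, hP, hc.symm⟩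

end DistSC

theorem distSC_comp_general (n m : ℕ) (f : (Fin n → Bool) → Bool) (g : (Fin m → Bool) → Bool)
    (p : ℝ) :
    distSC (bcomp f g) p ≤ distSC f (probOne g p) * distSC g p := by
  obtain ⟨P, hP, hPf⟩ := exists_determines_expec_codim_eq_distSC f (probOne g p)
  obtain ⟨Q, hQ, hQg⟩ := exists_determines_expec_codim_eq_distSC g p
  calc distSC (bcomp f g) p ≤ expec p fun x => ((P.comp g Q hQ).codim x : ℝ) :=
        distSC_le_expec_codim (P.determines_comp hP hQ) p
    _ = distSC f (probOne g p) * distSC g p := by rw [expec_codim_comp, hPf, hQg]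

/-- distributional subcube partition complexity is submultiplicative
under composition: `sc(f∘g, π_p) ≤ sc(f, π_{g(p)}) · sc(g, π_p)`. -/
theorem distSC_comp (n m : ℕ) (f : (Fin n → Bool) → Bool) (g : (Fin m → Bool) → Bool)
    (p : ℝ) (hp0 : 0 ≤ p) (hp1 : p ≤ 1) :
    distSC (bcomp f g) p ≤ distSC f (probOne g p) * distSC g p :=
  distSC_comp_general n m f g p
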